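/- arXiv:2012.02055 — 7 statements merged into one kernel-verified Lean document; each statement's English description precedes it below -/
import Mathlib

section
/- Let B be a bisimulation relation on a finite Markov decision process with discount factor γ ∈ [0,1), and let V* : S → ℝ be the unique function satisfying the Bellman optimality equation V*(s) = max_{a ∈ A} [ R(s,a) + γ · Σ_{s' ∈ S} P(s' | s,a) · V*(s') ]. Then for all states s_i, s_j with s_i ≡_B s_j, we have V*(s_i) = V*(s_j). -/
open Finset
open scoped Classical

/-- The Bellman optimality operator of a finite MDP. -/
noncomputable def bellman {S A : Type} [Fintype S] [Fintype A] [Nonempty A]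
    (γ : ℝ) (P : S → A → S → ℝ) (R : S → A → ℝ) (V : S → ℝ) (s : S) : ℝ :=
  univ.sup' univ_nonempty fun a => R s a + γ * ∑ s', P s a s' * V s'

/-- `B` is a bisimulation relation on the finite MDP `(P, R)`: an equivalence
relation such that related states have identical rewards and identical
transition probabilities into every equivalence class of `B`. -/
noncomputable def IsBisimulation {S A : Type} [Fintype S]
    (P : S → A → S → ℝ) (R : S → A → ℝ) (B : S → S → Prop) : Prop :=
  Equivalence B ∧
    ∀ si sj, B si sj →
      (∀ a, R si a = R sj a) ∧
      (∀ a (s₀ : S),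
        ∑ s' ∈ univ.filter (fun t => B s₀ t), P si a s' =
          ∑ s' ∈ univ.filter (fun t => B s₀ t), P sj a s')

/-- Bisimilar states have the same optimal value `V*`. -/
theorem bisimilar_states_equal_optimal_value
    {S A : Type} [Fintype S] [Nonempty S] [Fintype A] [Nonempty A]
    (γ : ℝ) (hγ0 : 0 ≤ γ) (hγ1 : γ < 1)
    (P : S → A → S → ℝ)
    (hP0 : ∀ s a s', 0 ≤ P s a s')
    (hP1 : ∀ s a, ∑ s', P s a s' = 1)
    (R : S → A → ℝ)
    (B : S → S → Prop) (hB : IsBisimulation P R B)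
    (V : S → ℝ) (hV : ∀ s, V s = bellman γ P R V s)
    (si sj : S) (hij : B si sj) :
    V si = V sj := by
  obtain ⟨hEq, hRel⟩ := hB
  -- invariance of sums of B-invariant functions
  letI st : Setoid S := ⟨B, hEq⟩
  have hinv : ∀ (f : S → ℝ), (∀ s t, B s t → f s = f t) →
      ∀ (a : A) (s1 s2 : S), B s1 s2 →
      ∑ s', P s1 a s' * f s' = ∑ s', P s2 a s' * f s' := by
    intro f hf a s1 s2 h12
    have key : ∀ s : S, ∑ s', P s a s' * f s' =
        ∑ q : Quotient st, f q.out * ∑ s' ∈ univ.filter (fun t => B q.out t), P s a s' := by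
      intro s
      rw [← Finset.sum_fiberwise univ (fun s' => Quotient.mk st s') (fun s' => P s a s' * f s')]
      refine Finset.sum_congr rfl fun q _ => ?_
      have hfib : (univ.filter fun s' => Quotient.mk st s' = q) =
          univ.filter (fun t => B q.out t) := by
        ext t
        simp only [mem_filter, mem_univ, true_and]
        rw [Quotient.mk_eq_iff_out]
        exact ⟨fun h => hEq.symm h, fun h => hEq.symm h⟩
      rw [hfib, Finset.mul_sum]
      refine Finset.sum_congr rfl fun t ht => ?_
      have hbt : B q.out t := (mem_filter.1 ht).2
      rw [hf t q.out (hEq.symm hbt)]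
      ring
    rw [key s1, key s2]
    refine Finset.sum_congr rfl fun q _ => ?_
    rw [(hRel s1 s2 h12).2 a q.out]
  -- the min of V over each class
  have hne : ∀ s : S, (univ.filter (fun t => B s t)).Nonempty :=
    fun s => ⟨s, mem_filter.2 ⟨mem_univ s, hEq.refl s⟩⟩
  set m : S → ℝ := fun s => (univ.filter (fun t => B s t)).inf' (hne s) V with hm
  have hm_inv : ∀ s t, B s t → m s = m t := by
    intro s t hst
    have : (univ.filter (fun u => B s u)) = (univ.filter (fun u => B t u)) := by
      ext u
      simp only [mem_filter, mem_univ, true_and]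
      exact ⟨fun h => hEq.trans (hEq.symm hst) h, fun h => hEq.trans hst h⟩
    simp only [hm, this]
  -- the set of bisimilar pairs and its diameter
  have hPrne : (univ.filter (fun p : S × S => B p.1 p.2)).Nonempty :=
    ⟨(si, si), mem_filter.2 ⟨mem_univ _, hEq.refl si⟩⟩
  set D : ℝ := (univ.filter (fun p : S × S => B p.1 p.2)).sup' hPrne
      (fun p => V p.1 - V p.2) with hD
  have hDpair : ∀ s t, B s t → V s - V t ≤ D := by
    intro s t hst
    have hmem : (s, t) ∈ univ.filter (fun p : S × S => B p.1 p.2) :=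
      mem_filter.2 ⟨mem_univ _, hst⟩
    exact Finset.le_sup' (fun p : S × S => V p.1 - V p.2) hmem
  have hD0 : 0 ≤ D := by
    have := hDpair si si (hEq.refl si)
    linarith
  -- pointwise bounds by m
  have hmle : ∀ s, m s ≤ V s := fun s =>
    Finset.inf'_le V (mem_filter.2 ⟨mem_univ s, hEq.refl s⟩)
  have hVle : ∀ s, V s ≤ m s + D := by
    intro s
    obtain ⟨y, hy, hym⟩ := Finset.exists_mem_eq_inf' (hne s) V
    have hby : B s y := (mem_filter.1 hy).2
    have := hDpair s y hby
    simp only [hm]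
    rw [hym]
    linarith
  -- expected-value comparison
  have hsum : ∀ (a : A) (s1 s2 : S), B s1 s2 →
      ∑ s', P s1 a s' * V s' ≤ (∑ s', P s2 a s' * V s') + D := by
    intro a s1 s2 h12
    have h1 : ∑ s', P s1 a s' * V s' ≤ ∑ s', P s1 a s' * (m s' + D) := by
      refine Finset.sum_le_sum fun s' _ => ?_
      exact mul_le_mul_of_nonneg_left (hVle s') (hP0 s1 a s')
    have h2 : ∑ s', P s1 a s' * (m s' + D) =
        (∑ s', P s1 a s' * m s') + D := by
      rw [show (fun s' => P s1 a s' * (m s' + D)) = fun s' => P s1 a s' * m s' + P s1 a s' * D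
        from funext fun s' => by ring]
      rw [Finset.sum_add_distrib, ← Finset.sum_mul, hP1 s1 a, one_mul]
    have h3 : ∑ s', P s1 a s' * m s' = ∑ s', P s2 a s' * m s' :=
      hinv m hm_inv a s1 s2 h12
    have h4 : ∑ s', P s2 a s' * m s' ≤ ∑ s', P s2 a s' * V s' := by
      refine Finset.sum_le_sum fun s' _ => ?_
      exact mul_le_mul_of_nonneg_left (hmle s') (hP0 s2 a s')
    calc ∑ s', P s1 a s' * V s' ≤ ∑ s', P s1 a s' * (m s' + D) := h1
      _ = (∑ s', P s1 a s' * m s') + D := h2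
      _ = (∑ s', P s2 a s' * m s') + D := by rw [h3]
      _ ≤ (∑ s', P s2 a s' * V s') + D := by linarith
  -- contraction: every bisimilar pair has gap ≤ γ * D
  have hgap : ∀ s1 s2, B s1 s2 → V s1 - V s2 ≤ γ * D := by
    intro s1 s2 h12
    obtain ⟨a, _, ha⟩ := Finset.exists_mem_eq_sup' (univ_nonempty (α := A))
      (fun a => R s1 a + γ * ∑ s', P s1 a s' * V s')
    have hV1 : V s1 = R s1 a + γ * ∑ s', P s1 a s' * V s' := by
      rw [hV s1, bellman, ha]
    have hV2 : R s2 a + γ * ∑ s', P s2 a s' * V s' ≤ V s2 := by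
      rw [hV s2, bellman]
      exact Finset.le_sup' (fun a => R s2 a + γ * ∑ s', P s2 a s' * V s') (mem_univ a)
    have hR : R s1 a = R s2 a := (hRel s1 s2 h12).1 a
    have hs := hsum a s1 s2 h12
    have : γ * ∑ s', P s1 a s' * V s' ≤ γ * ((∑ s', P s2 a s' * V s') + D) :=
      mul_le_mul_of_nonneg_left hs hγ0
    rw [hV1]
    nlinarith
  have hDle : D ≤ γ * D := by
    refine Finset.sup'_le _ _ fun p hp => ?_
    exact hgap p.1 p.2 (mem_filter.1 hp).2
  have hDz : D = 0 := by nlinarith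
  have h1 := hgap si sj hij
  have h2 := hgap sj si (hEq.symm hij)
  rw [hDz] at h1 h2
  linarith
end

section
/- Let B be a bisimulation relation on a finite Markov decision process and suppose s_i ≡_B s_j. Then for every n ∈ ℕ and every finite action sequence a_0, a_1, …, a_{n-1} ∈ A, the probability distribution of the reward sequence (R(S_0, a_0), R(S_1, a_1), …, R(S_{n-1}, a_{n-1})) ∈ ℝⁿ, where the random states satisfy S_0 = s_i and S_{t+1} is drawn from P(·|S_t, a_t), is identical to the corresponding distribution of the reward sequence started from S_0 = s_j. In other words, bisimilar states yield identical probabilistic sequences of rewards under every action sequence. -/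
open Finset
open scoped Classical

/-- `rewardSeqProb P R n s as rs` is the probability that, starting from state `s`
and taking actions `as 0, as 1, …, as (n-1)` with states evolving according to `P`,
the observed sequence of rewards is `(rs 0, rs 1, …, rs (n-1))`.  It is the total
probability of all length-`n` state trajectories whose rewards match `rs`. -/
noncomputable def rewardSeqProb {S A : Type} [Fintype S]
    (P : S → A → S → ℝ) (R : S → A → ℝ) :
    ℕ → S → (ℕ → A) → (ℕ → ℝ) → ℝ
  | 0, _, _, _ => 1
  | n + 1, s, as, rs =>
      (if R s (as 0) = rs 0 then (1 : ℝ) else 0) *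
        ∑ s', P s (as 0) s' *
          rewardSeqProb P R n s' (fun k => as (k + 1)) (fun k => rs (k + 1))

/-- If `f` is constant on `B`-classes, then the `P`-weighted average of `f`
agrees across bisimilar states. -/
lemma weighted_sum_eq_of_bisim {S A : Type} [Fintype S]
    (P : S → A → S → ℝ) (R : S → A → ℝ) (B : S → S → Prop)
    (hB : IsBisimulation P R B) (si sj : S) (hij : B si sj) (a : A)
    (f : S → ℝ) (hf : ∀ x y, B x y → f x = f y) :
    ∑ s', P si a s' * f s' = ∑ s', P sj a s' * f s' := by
  classical
  let st : Setoid S := ⟨B, hB.1⟩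
  have key : ∀ (s : S),
      ∑ s', P s a s' * f s' =
      ∑ q : Quotient st, f (Quotient.out q) *
        ∑ s' ∈ univ.filter (fun t => B (Quotient.out q) t), P s a s' := by
    intro s
    rw [← Finset.sum_fiberwise_of_maps_to
      (g := fun s' : S => (Quotient.mk st s' : Quotient st))
      (fun x _ => mem_univ _) (fun s' => P s a s' * f s')]
    refine Finset.sum_congr rfl fun q _ => ?_
    have hfil : univ.filter (fun s' : S => (Quotient.mk st s' : Quotient st) = q)
        = univ.filter (fun t => B (Quotient.out q) t) := by
      ext x
      simp only [mem_filter, mem_univ, true_and]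
      constructor
      · intro h
        have : Quotient.mk st x = Quotient.mk st (Quotient.out q) := by
          rw [h, Quotient.out_eq]
        exact hB.1.symm (Quotient.exact this)
      · intro h
        have : Quotient.mk st x = Quotient.mk st (Quotient.out q) :=
          Quotient.sound (hB.1.symm h)
        rw [this, Quotient.out_eq]
    rw [hfil, Finset.mul_sum]
    refine Finset.sum_congr rfl fun x hx => ?_
    have hx' : B (Quotient.out q) x := (mem_filter.mp hx).2
    rw [hf x (Quotient.out q) (hB.1.symm hx')]
    ring
  rw [key si, key sj]
  refine Finset.sum_congr rfl fun q _ => ?_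
  rw [((hB.2 si sj hij).2) a (Quotient.out q)]

/-- Bisimilar states yield identical probabilistic sequences of rewards under
every finite action sequence: for every `n`, every action sequence and every
candidate reward sequence, the probability of observing that reward sequence
from `si` equals the probability of observing it from `sj`. -/
theorem bisimilar_states_same_reward_sequence_distribution
    {S A : Type} [Fintype S] [Nonempty S] [Fintype A] [Nonempty A]
    (P : S → A → S → ℝ)
    (hP0 : ∀ s a s', 0 ≤ P s a s')
    (hP1 : ∀ s a, ∑ s', P s a s' = 1)
    (R : S → A → ℝ)
    (B : S → S → Prop) (hB : IsBisimulation P R B)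
    (si sj : S) (hij : B si sj) :
    ∀ (n : ℕ) (as : ℕ → A) (rs : ℕ → ℝ),
      rewardSeqProb P R n si as rs = rewardSeqProb P R n sj as rs := by
  intro n
  induction n generalizing si sj hij with
  | zero => intro as rs; rfl
  | succ n ih =>
    intro as rs
    have hR : R si (as 0) = R sj (as 0) := (hB.2 si sj hij).1 (as 0)
    show (if R si (as 0) = rs 0 then (1:ℝ) else 0) * _ =
      (if R sj (as 0) = rs 0 then (1:ℝ) else 0) * _
    rw [hR,
      weighted_sum_eq_of_bisim P R B hB si sj hij (as 0)
        (fun s' => rewardSeqProb P R n s' (fun k => as (k+1)) (fun k => rs (k+1)))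
        (fun x y hxy => ih x y hxy _ _)]
end

section
/- On any finite Markov decision process there exists a largest (coarsest) bisimulation relation: the relation ~ defined by s_i ~ s_j if and only if there exists some bisimulation relation B with s_i ≡_B s_j is itself an equivalence relation and a bisimulation relation, and it contains every bisimulation relation. -/
open Finset
open scoped Classical

/-- Key lemma: if `G` is saturated with respect to a bisimulation `B`, then
`B`-related states have equal total transition probability into `G`. -/
lemma bisim_sum_saturated {S A : Type} [Fintype S]
    (P : S → A → S → ℝ) (R : S → A → ℝ) (B : S → S → Prop)
    (hB : IsBisimulation P R B) {si sj : S} (h : B si sj)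
    (G : Finset S) (hG : ∀ t ∈ G, ∀ t', B t t' → t' ∈ G) (a : A) :
    ∑ s' ∈ G, P si a s' = ∑ s' ∈ G, P sj a s' := by
  set sd : Setoid S := ⟨B, hB.1⟩ with hsd
  have hfib : ∀ q ∈ G.image (Quotient.mk sd),
      G.filter (fun t => Quotient.mk sd t = q) =
        univ.filter (fun t => B q.out t) := by
    intro q hq
    obtain ⟨u, huG, huq⟩ := Finset.mem_image.mp hq
    ext t
    simp only [Finset.mem_filter, Finset.mem_univ, true_and]
    constructor
    · rintro ⟨-, ht⟩
      have : Quotient.mk sd q.out = Quotient.mk sd t := by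
        rw [ht, Quotient.out_eq]
      exact Quotient.exact this
    · intro hbt
      have hu : B u q.out := Quotient.exact (huq.trans (Quotient.out_eq q).symm)
      refine ⟨hG u huG t (hB.1.trans hu hbt), ?_⟩
      exact (Quotient.sound hbt).symm.trans (Quotient.out_eq q)
  have key : ∀ x : S, ∑ s' ∈ G, P x a s' =
      ∑ q ∈ G.image (Quotient.mk sd),
        ∑ s' ∈ univ.filter (fun t => B q.out t), P x a s' := by
    intro x
    rw [← Finset.sum_fiberwise_of_maps_to (t := G.image (Quotient.mk sd))
      (g := Quotient.mk sd) (fun i hi => Finset.mem_image_of_mem _ hi) (P x a)]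
    exact Finset.sum_congr rfl fun q hq => by rw [hfib q hq]
  rw [key si, key sj]
  exact Finset.sum_congr rfl fun q _ => (hB.2 si sj h).2 a q.out

/-- The equivalence generated by the union of two bisimulations is a
bisimulation. -/
lemma eqvGen_union_bisim {S A : Type} [Fintype S]
    (P : S → A → S → ℝ) (R : S → A → ℝ) (B₁ B₂ : S → S → Prop)
    (h₁ : IsBisimulation P R B₁) (h₂ : IsBisimulation P R B₂) :
    IsBisimulation P R (Relation.EqvGen (fun x y => B₁ x y ∨ B₂ x y)) := by
  set E := Relation.EqvGen (fun x y => B₁ x y ∨ B₂ x y) with hE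
  have hEq : Equivalence E := Relation.EqvGen.is_equivalence _
  have hsat : ∀ (B : S → S → Prop), (∀ x y, B x y → E x y) →
      ∀ s₀, ∀ t ∈ univ.filter (fun t => E s₀ t), ∀ t', B t t' →
        t' ∈ univ.filter (fun t => E s₀ t) := by
    intro B hBE s₀ t ht t' htt'
    simp only [Finset.mem_filter, Finset.mem_univ, true_and] at ht ⊢
    exact hEq.trans ht (hBE _ _ htt')
  have hB₁E : ∀ x y, B₁ x y → E x y := fun x y h =>
    Relation.EqvGen.rel x y (Or.inl h)
  have hB₂E : ∀ x y, B₂ x y → E x y := fun x y h =>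
    Relation.EqvGen.rel x y (Or.inr h)
  refine ⟨hEq, fun si sj hij => ?_⟩
  induction hij with
  | rel x y hxy =>
    rcases hxy with h | h
    · exact ⟨(h₁.2 x y h).1, fun a s₀ =>
        bisim_sum_saturated P R B₁ h₁ h _ (hsat B₁ hB₁E s₀) a⟩
    · exact ⟨(h₂.2 x y h).1, fun a s₀ =>
        bisim_sum_saturated P R B₂ h₂ h _ (hsat B₂ hB₂E s₀) a⟩
  | refl x => exact ⟨fun _ => rfl, fun _ _ => rfl⟩
  | symm x y _ ih => exact ⟨fun a => (ih.1 a).symm, fun a s₀ => (ih.2 a s₀).symm⟩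
  | trans x y z _ _ ih₁ ih₂ =>
    exact ⟨fun a => (ih₁.1 a).trans (ih₂.1 a),
      fun a s₀ => (ih₁.2 a s₀).trans (ih₂.2 a s₀)⟩

/-- On any finite MDP there is a largest (coarsest) bisimulation relation:
the relation `s_i ~ s_j ↔ ∃ bisimulation B, B s_i s_j` is itself a bisimulation
relation (in particular an equivalence relation), and it contains every
bisimulation relation. -/
theorem exists_largest_bisimulation
    {S A : Type} [Fintype S] [Nonempty S] [Fintype A] [Nonempty A]
    (P : S → A → S → ℝ)
    (hP0 : ∀ s a s', 0 ≤ P s a s')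
    (hP1 : ∀ s a, ∑ s', P s a s' = 1)
    (R : S → A → ℝ) :
    IsBisimulation P R (fun si sj => ∃ B, IsBisimulation P R B ∧ B si sj) ∧
    ∀ B : S → S → Prop, IsBisimulation P R B →
      ∀ si sj, B si sj → (∃ B', IsBisimulation P R B' ∧ B' si sj) := by
  set Big : S → S → Prop := fun si sj => ∃ B, IsBisimulation P R B ∧ B si sj
    with hBig
  have hEqBisim : IsBisimulation P R (Eq : S → S → Prop) :=
    ⟨eq_equivalence, fun si sj h => by subst h; exact ⟨fun _ => rfl, fun _ _ => rfl⟩⟩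
  have hrefl : ∀ s, Big s s := fun s => ⟨Eq, hEqBisim, rfl⟩
  have hsymm : ∀ {x y}, Big x y → Big y x := by
    rintro x y ⟨B, hB, h⟩; exact ⟨B, hB, hB.1.symm h⟩
  have htrans : ∀ {x y z}, Big x y → Big y z → Big x z := by
    rintro x y z ⟨B₁, hB₁, h1⟩ ⟨B₂, hB₂, h2⟩
    refine ⟨_, eqvGen_union_bisim P R B₁ B₂ hB₁ hB₂, ?_⟩
    exact (Relation.EqvGen.is_equivalence _).trans
      (Relation.EqvGen.rel _ _ (Or.inl h1))
      (Relation.EqvGen.rel _ _ (Or.inr h2))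
  have hEq : Equivalence Big := ⟨hrefl, hsymm, htrans⟩
  refine ⟨⟨hEq, ?_⟩, fun B hB si sj h => ⟨B, hB, h⟩⟩
  rintro si sj ⟨B, hB, h⟩
  refine ⟨(hB.2 si sj h).1, fun a s₀ => ?_⟩
  apply bisim_sum_saturated P R B hB h
  intro t ht t' htt'
  simp only [Finset.mem_filter, Finset.mem_univ, true_and] at ht ⊢
  exact htrans ht ⟨B, hB, htt'⟩
end

section
/- Fix a finite Markov decision process and c ∈ [0,1). The operator F defined on functions d : S × S → ℝ with 0 ≤ d by F(d)(s_i, s_j) = max_{a ∈ A} [ (1−c)·|R(s_i,a) − R(s_j,a)| + c·W₁(P(·|s_i,a), P(·|s_j,a); d) ] is a contraction with Lipschitz constant c with respect to the supremum norm on bounded nonnegative functions S × S → ℝ, and consequently F has a unique bounded nonnegative fixed point d̃ (the bisimulation metric). -/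
/-! The Wasserstein distance `W₁(μ, ν; d)` is monotone and `1`-Lipschitz in the cost `d` for the
sup norm, since every coupling has total mass `1`. Hence each term of the maximum defining
`F(d)`, and so `F(d)` itself, moves by at most `c · ‖d - d'‖∞`: `F` is a `c`-contraction of the
complete space of nonnegative costs, and Banach's fixed point theorem applies. -/

open Finset

/-- `g` is a coupling of the probability mass functions `μ` and `ν` on a finite
set `S`. -/
def IsCoupling {S : Type} [Fintype S] (μ ν : S → ℝ) (g : S × S → ℝ) : Prop :=
  (∀ p, 0 ≤ g p) ∧
  (∀ s, ∑ s', g (s, s') = μ s) ∧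
  (∀ s', ∑ s, g (s, s') = ν s')

/-- The 1-Wasserstein distance between `μ` and `ν` with cost function `d`. -/
noncomputable def W1 {S : Type} [Fintype S] (μ ν : S → ℝ) (d : S × S → ℝ) : ℝ :=
  sInf {x | ∃ g : S × S → ℝ, IsCoupling μ ν g ∧ x = ∑ p, d p * g p}

/-- The operator whose unique fixed point is the bisimulation metric:
`F(d)(sᵢ, sⱼ) = max_a [(1-c)·|R(sᵢ,a) - R(sⱼ,a)| + c·W₁(P(·|sᵢ,a), P(·|sⱼ,a); d)]`. -/
noncomputable def bisimF {S A : Type} [Fintype S] [Fintype A] [Nonempty A]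
    (c : ℝ) (P : S → A → S → ℝ) (R : S → A → ℝ)
    (d : S × S → ℝ) (p : S × S) : ℝ :=
  univ.sup' univ_nonempty fun a =>
    (1 - c) * |R p.1 a - R p.2 a| + c * W1 (P p.1 a) (P p.2 a) d

section SupDifference

variable {ι α : Type*} [AddCommGroup α] [LinearOrder α] [IsOrderedAddMonoid α]

theorem Finset.sup'_le_sup'_add {s : Finset ι} (hs : s.Nonempty) {f g : ι → α} {M : α}
    (h : ∀ i ∈ s, f i ≤ g i + M) : s.sup' hs f ≤ s.sup' hs g + M :=
  sup'_le _ _ fun i hi => (h i hi).trans (add_le_add_left (le_sup' g hi) M)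

theorem Finset.abs_sup'_sub_sup'_le {s : Finset ι} (hs : s.Nonempty) {f g : ι → α} {M : α}
    (h : ∀ i ∈ s, |f i - g i| ≤ M) : |s.sup' hs f - s.sup' hs g| ≤ M := by
  rw [abs_sub_le_iff, sub_le_iff_le_add', sub_le_iff_le_add']
  constructor
  · exact sup'_le_sup'_add hs fun i hi => sub_le_iff_le_add'.mp (abs_sub_le_iff.mp (h i hi)).1
  · exact sup'_le_sup'_add hs fun i hi => sub_le_iff_le_add'.mp (abs_sub_le_iff.mp (h i hi)).2

end SupDifference

section Wasserstein

variable {S : Type} [Fintype S] {μ ν : S → ℝ} {d d' g : S × S → ℝ}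

theorem exists_isCoupling (hμ0 : ∀ s, 0 ≤ μ s) (hν0 : ∀ s, 0 ≤ ν s)
    (hμ1 : ∑ s, μ s = 1) (hν1 : ∑ s, ν s = 1) : ∃ g, IsCoupling μ ν g := by
  refine ⟨fun p => μ p.1 * ν p.2, fun p => mul_nonneg (hμ0 _) (hν0 _), fun s => ?_, fun s' => ?_⟩
  · dsimp only
    rw [← mul_sum, hν1, mul_one]
  · dsimp only
    rw [← sum_mul, hμ1, one_mul]

theorem IsCoupling.sum_eq_one (hg : IsCoupling μ ν g) (hμ1 : ∑ s, μ s = 1) : ∑ p, g p = 1 := by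
  rw [Fintype.sum_prod_type, ← hμ1]
  exact sum_congr rfl fun s _ => hg.2.1 s

theorem W1_le_of_isCoupling (hd : ∀ p, 0 ≤ d p) (hg : IsCoupling μ ν g) :
    W1 μ ν d ≤ ∑ p, d p * g p := by
  refine csInf_le ⟨0, ?_⟩ ⟨g, hg, rfl⟩
  rintro _ ⟨g', hg', rfl⟩
  exact sum_nonneg fun p _ => mul_nonneg (hd p) (hg'.1 p)

theorem W1_nonneg (hd : ∀ p, 0 ≤ d p) : 0 ≤ W1 μ ν d := by
  refine Real.sInf_nonneg ?_
  rintro _ ⟨g, hg, rfl⟩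
  exact sum_nonneg fun p _ => mul_nonneg (hd p) (hg.1 p)

theorem W1_le_W1_add (hμ0 : ∀ s, 0 ≤ μ s) (hν0 : ∀ s, 0 ≤ ν s)
    (hμ1 : ∑ s, μ s = 1) (hν1 : ∑ s, ν s = 1) (hd : ∀ p, 0 ≤ d p) {M : ℝ}
    (h : ∀ p, d p ≤ d' p + M) : W1 μ ν d ≤ W1 μ ν d' + M := by
  rw [← sub_le_iff_le_add]
  obtain ⟨g₀, hg₀⟩ := exists_isCoupling hμ0 hν0 hμ1 hν1
  refine le_csInf ⟨_, g₀, hg₀, rfl⟩ ?_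
  rintro _ ⟨g, hg, rfl⟩
  rw [sub_le_iff_le_add]
  calc W1 μ ν d ≤ ∑ p, d p * g p := W1_le_of_isCoupling hd hg
    _ ≤ ∑ p, (d' p + M) * g p := sum_le_sum fun p _ => mul_le_mul_of_nonneg_right (h p) (hg.1 p)
    _ = ∑ p, d' p * g p + M := by
      simp only [add_mul, sum_add_distrib, ← mul_sum, hg.sum_eq_one hμ1, mul_one]

theorem abs_W1_sub_W1_le (hμ0 : ∀ s, 0 ≤ μ s) (hν0 : ∀ s, 0 ≤ ν s)
    (hμ1 : ∑ s, μ s = 1) (hν1 : ∑ s, ν s = 1) (hd : ∀ p, 0 ≤ d p) (hd' : ∀ p, 0 ≤ d' p)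
    {M : ℝ} (h : ∀ p, |d p - d' p| ≤ M) : |W1 μ ν d - W1 μ ν d'| ≤ M := by
  rw [abs_sub_le_iff, sub_le_iff_le_add', sub_le_iff_le_add']
  constructor
  · exact W1_le_W1_add hμ0 hν0 hμ1 hν1 hd fun p => by linarith [(abs_le.mp (h p)).2]
  · exact W1_le_W1_add hμ0 hν0 hμ1 hν1 hd' fun p => by linarith [(abs_le.mp (h p)).1]

end Wasserstein

section BisimulationOperator

variable {S A : Type} [Fintype S] [Fintype A] [Nonempty A] {c : ℝ} {P : S → A → S → ℝ}
  {R : S → A → ℝ} {d d' : S × S → ℝ}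

theorem bisimF_nonneg (hc0 : 0 ≤ c) (hc1 : c ≤ 1) (hd : ∀ p, 0 ≤ d p) (p : S × S) :
    0 ≤ bisimF c P R d p := by
  obtain ⟨a⟩ := ‹Nonempty A›
  refine le_trans ?_ (le_sup' _ (mem_univ a))
  have := W1_nonneg (μ := P p.1 a) (ν := P p.2 a) hd
  have : 0 ≤ 1 - c := sub_nonneg.mpr hc1
  positivity

theorem abs_bisimF_sub_bisimF_le (hc0 : 0 ≤ c) (hP0 : ∀ s a s', 0 ≤ P s a s')
    (hP1 : ∀ s a, ∑ s', P s a s' = 1) (hd : ∀ p, 0 ≤ d p) (hd' : ∀ p, 0 ≤ d' p) {M : ℝ}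
    (h : ∀ p, |d p - d' p| ≤ M) (p : S × S) :
    |bisimF c P R d p - bisimF c P R d' p| ≤ c * M := by
  refine abs_sup'_sub_sup'_le _ fun a _ => ?_
  rw [add_sub_add_left_eq_sub, ← mul_sub, abs_mul, abs_of_nonneg hc0]
  exact mul_le_mul_of_nonneg_left
    (abs_W1_sub_W1_le (hP0 _ a) (hP0 _ a) (hP1 _ a) (hP1 _ a) hd hd' h) hc0

theorem mapsTo_bisimF (hc0 : 0 ≤ c) (hc1 : c ≤ 1) :
    Set.MapsTo (bisimF c P R) {d | ∀ p, 0 ≤ d p} {d | ∀ p, 0 ≤ d p} :=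
  fun _ hd => bisimF_nonneg hc0 hc1 hd

theorem contractingWith_bisimF_restrict (hc0 : 0 ≤ c) (hc1 : c < 1)
    (hP0 : ∀ s a s', 0 ≤ P s a s') (hP1 : ∀ s a, ∑ s', P s a s' = 1) :
    ContractingWith (⟨c, hc0⟩ : NNReal) ((mapsTo_bisimF (P := P) (R := R) hc0 hc1.le).restrict) := by
  refine ⟨hc1, LipschitzWith.of_dist_le_mul fun d d' => ?_⟩
  change _ ≤ c * _
  rw [Subtype.dist_eq, Subtype.dist_eq, dist_pi_le_iff (mul_nonneg hc0 dist_nonneg)]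
  intro p
  rw [Real.dist_eq]
  exact abs_bisimF_sub_bisimF_le hc0 hP0 hP1 d.2 d'.2
    (fun q => (Real.dist_eq _ _).symm.trans_le (dist_le_pi_dist _ _ q)) p

end BisimulationOperator

theorem isClosed_setOf_forall_nonneg (ι : Type*) :
    IsClosed {d : ι → ℝ | ∀ p, 0 ≤ d p} := by
  rw [Set.ofPred_forall]
  exact isClosed_iInter fun p => isClosed_le continuous_const (continuous_apply p)

theorem ContractingWith.existsUnique_isFixedPt {α : Type*} [MetricSpace α] [CompleteSpace α]
    [Nonempty α] {K : NNReal} {f : α → α} (hf : ContractingWith K f) :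
    ∃! x, Function.IsFixedPt f x :=
  ⟨fixedPoint f hf, hf.fixedPoint_isFixedPt, fun _ hx => hf.fixedPoint_unique hx⟩

/-- The bisimulation-metric operator `F` is a `c`-contraction in the supremum
norm on (bounded) nonnegative functions `S × S → ℝ`, and hence has a unique
(bounded) nonnegative fixed point — the bisimulation metric.  (Since `S` is
finite, every function `S × S → ℝ` is bounded.) -/
theorem bisimF_contraction_and_unique_fixed_point
    {S A : Type} [Fintype S] [Nonempty S] [Fintype A] [Nonempty A]
    (c : ℝ) (hc0 : 0 ≤ c) (hc1 : c < 1)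
    (P : S → A → S → ℝ)
    (hP0 : ∀ s a s', 0 ≤ P s a s')
    (hP1 : ∀ s a, ∑ s', P s a s' = 1)
    (R : S → A → ℝ) :
    (∀ d d' : S × S → ℝ, (∀ p, 0 ≤ d p) → (∀ p, 0 ≤ d' p) →
      (univ.sup' univ_nonempty fun p : S × S =>
          |bisimF c P R d p - bisimF c P R d' p|) ≤
        c * univ.sup' univ_nonempty fun p : S × S => |d p - d' p|) ∧
    (∃! dt : S × S → ℝ, (∀ p, 0 ≤ dt p) ∧ bisimF c P R dt = dt) := by
  refine ⟨fun d d' hd hd' => sup'_le _ _ fun p _ => abs_bisimF_sub_bisimF_le hc0 hP0 hP1 hd hd'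
    (fun q => le_sup' (fun q => |d q - d' q|) (mem_univ q)) p, ?_⟩
  have : CompleteSpace {d : S × S → ℝ | ∀ p, 0 ≤ d p} :=
    (isClosed_setOf_forall_nonneg _).completeSpace_coe
  have : Nonempty {d : S × S → ℝ | ∀ p, 0 ≤ d p} := ⟨⟨0, fun _ => le_rfl⟩⟩
  obtain ⟨dt, hdt, huniq⟩ :=
    (contractingWith_bisimF_restrict (R := R) hc0 hc1 hP0 hP1).existsUnique_isFixedPt
  exact ⟨dt, ⟨dt.2, congrArg Subtype.val hdt⟩,
    fun d ⟨hd, hfix⟩ => congrArg Subtype.val (huniq ⟨d, hd⟩ (Subtype.ext hfix))⟩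
end

section
/- Fix a finite Markov decision process and c ∈ [0,1), and let d̃ be the unique bounded nonnegative fixed point of the operator F(d)(s_i, s_j) = max_{a ∈ A} [ (1−c)·|R(s_i,a) − R(s_j,a)| + c·W₁(P(·|s_i,a), P(·|s_j,a); d) ]. Then d̃ is a pseudometric on S: d̃(s,s) = 0 for all s ∈ S, d̃(s_i,s_j) = d̃(s_j,s_i) for all s_i, s_j ∈ S, and d̃(s_i,s_k) ≤ d̃(s_i,s_j) + d̃(s_j,s_k) for all s_i, s_j, s_k ∈ S. -/
open Finset

section helper
variable {S : Type} [Fintype S]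

lemma W1_bddBelow (μ ν : S → ℝ) (d : S × S → ℝ) (hd : ∀ p, 0 ≤ d p) :
    BddBelow {x | ∃ g : S × S → ℝ, IsCoupling μ ν g ∧ x = ∑ p, d p * g p} := by
  refine ⟨0, fun x hx => ?_⟩
  obtain ⟨g, hg, rfl⟩ := hx
  exact Finset.sum_nonneg fun p _ => mul_nonneg (hd p) (hg.1 p)

lemma W1_le (μ ν : S → ℝ) (d : S × S → ℝ) (hd : ∀ p, 0 ≤ d p)
    (g : S × S → ℝ) (hg : IsCoupling μ ν g) :
    W1 μ ν d ≤ ∑ p, d p * g p :=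
  csInf_le (W1_bddBelow μ ν d hd) ⟨g, hg, rfl⟩

lemma isCoupling_prod (μ ν : S → ℝ)
    (hμ0 : ∀ s, 0 ≤ μ s) (hν0 : ∀ s, 0 ≤ ν s)
    (hμ1 : ∑ s, μ s = 1) (hν1 : ∑ s, ν s = 1) :
    IsCoupling μ ν (fun p => μ p.1 * ν p.2) := by
  refine ⟨fun p => mul_nonneg (hμ0 p.1) (hν0 p.2), fun s => ?_, fun s' => ?_⟩
  · simp only []
    rw [← Finset.mul_sum, hν1, mul_one]
  · simp only []
    rw [← Finset.sum_mul, hμ1, one_mul]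

lemma W1_exists_lt (μ ν : S → ℝ) (d : S × S → ℝ) (hd : ∀ p, 0 ≤ d p)
    (hμ0 : ∀ s, 0 ≤ μ s) (hν0 : ∀ s, 0 ≤ ν s)
    (hμ1 : ∑ s, μ s = 1) (hν1 : ∑ s, ν s = 1)
    (ε : ℝ) (hε : 0 < ε) :
    ∃ g : S × S → ℝ, IsCoupling μ ν g ∧ ∑ p, d p * g p < W1 μ ν d + ε := by
  have hne : {x | ∃ g : S × S → ℝ, IsCoupling μ ν g ∧ x = ∑ p, d p * g p}.Nonempty :=
    ⟨_, ⟨_, isCoupling_prod μ ν hμ0 hν0 hμ1 hν1, rfl⟩⟩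
  obtain ⟨x, hx, hxlt⟩ := exists_lt_of_csInf_lt hne (lt_add_of_pos_right _ hε)
  obtain ⟨g, hg, rfl⟩ := hx
  exact ⟨g, hg, hxlt⟩

lemma coupling_total (μ ν : S → ℝ) (g : S × S → ℝ) (hg : IsCoupling μ ν g)
    (hμ1 : ∑ s, μ s = 1) : ∑ p, g p = 1 := by
  rw [Fintype.sum_prod_type]
  simp only [hg.2.1, hμ1]

lemma W1_tri (μ ν ρ : S → ℝ) (d : S × S → ℝ)
    (hμ0 : ∀ s, 0 ≤ μ s) (hν0 : ∀ s, 0 ≤ ν s) (hρ0 : ∀ s, 0 ≤ ρ s)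
    (hμ1 : ∑ s, μ s = 1) (hν1 : ∑ s, ν s = 1) (hρ1 : ∑ s, ρ s = 1)
    (hd0 : ∀ p, 0 ≤ d p) (T : ℝ)
    (hT : ∀ s1 s2 s3 : S, d (s1, s3) ≤ d (s1, s2) + d (s2, s3) + T) :
    W1 μ ρ d ≤ W1 μ ν d + W1 ν ρ d + T := by
  apply le_of_forall_pos_le_add
  intro ε hε
  obtain ⟨g12, hg12, hc12⟩ := W1_exists_lt μ ν d hd0 hμ0 hν0 hμ1 hν1 (ε/2) (by linarith)
  obtain ⟨g23, hg23, hc23⟩ := W1_exists_lt ν ρ d hd0 hν0 hρ0 hν1 hρ1 (ε/2) (by linarith)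
  -- the glued 3-dimensional mass
  set h : S → S → S → ℝ := fun s1 s2 s3 =>
    if ν s2 = 0 then 0 else g12 (s1, s2) * g23 (s2, s3) / ν s2 with hh
  have hh0 : ∀ s1 s2 s3, 0 ≤ h s1 s2 s3 := by
    intro s1 s2 s3
    simp only [hh]
    split
    · exact le_refl 0
    · exact div_nonneg (mul_nonneg (hg12.1 _) (hg23.1 _)) (hν0 s2)
  have hz12 : ∀ s1 s2, ν s2 = 0 → g12 (s1, s2) = 0 := by
    intro s1 s2 hz
    have hsum : ∑ s, g12 (s, s2) = 0 := by rw [hg12.2.2 s2, hz]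
    exact (Finset.sum_eq_zero_iff_of_nonneg (fun s _ => hg12.1 (s, s2))).1 hsum s1 (mem_univ s1)
  have hz23 : ∀ s2 s3, ν s2 = 0 → g23 (s2, s3) = 0 := by
    intro s2 s3 hz
    have hsum : ∑ s', g23 (s2, s') = 0 := by rw [hg23.2.1 s2, hz]
    exact (Finset.sum_eq_zero_iff_of_nonneg (fun s _ => hg23.1 (s2, s))).1 hsum s3 (mem_univ s3)
  have hsum3 : ∀ s1 s2, ∑ s3, h s1 s2 s3 = g12 (s1, s2) := by
    intro s1 s2
    by_cases hz : ν s2 = 0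
    · simp [hh, hz, hz12 s1 s2 hz]
    · simp only [hh, if_neg hz]
      rw [← Finset.sum_div, ← Finset.mul_sum, hg23.2.1 s2, mul_div_assoc, div_self hz, mul_one]
  have hsum1 : ∀ s2 s3, ∑ s1, h s1 s2 s3 = g23 (s2, s3) := by
    intro s2 s3
    by_cases hz : ν s2 = 0
    · simp [hh, hz, hz23 s2 s3 hz]
    · simp only [hh, if_neg hz]
      rw [← Finset.sum_div, ← Finset.sum_mul, hg12.2.2 s2, mul_comm, mul_div_assoc,
        div_self hz, mul_one]
  set g13 : S × S → ℝ := fun p => ∑ s2, h p.1 s2 p.2 with hg13def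
  have hg13 : IsCoupling μ ρ g13 := by
    refine ⟨fun p => Finset.sum_nonneg fun s2 _ => hh0 _ _ _, fun s1 => ?_, fun s3 => ?_⟩
    · simp only [hg13def]
      rw [Finset.sum_comm]
      calc ∑ s2, ∑ s3, h s1 s2 s3 = ∑ s2, g12 (s1, s2) := by
            exact Finset.sum_congr rfl fun s2 _ => hsum3 s1 s2
        _ = μ s1 := hg12.2.1 s1
    · simp only [hg13def]
      rw [Finset.sum_comm]
      calc ∑ s2, ∑ s1, h s1 s2 s3 = ∑ s2, g23 (s2, s3) := by
            exact Finset.sum_congr rfl fun s2 _ => hsum1 s2 s3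
        _ = ρ s3 := hg23.2.2 s3
  have htot : ∑ s1, ∑ s2, ∑ s3, h s1 s2 s3 = 1 := by
    calc ∑ s1, ∑ s2, ∑ s3, h s1 s2 s3 = ∑ s1, ∑ s2, g12 (s1, s2) := by
          exact Finset.sum_congr rfl fun s1 _ =>
            Finset.sum_congr rfl fun s2 _ => hsum3 s1 s2
      _ = ∑ s1, μ s1 := Finset.sum_congr rfl fun s1 _ => hg12.2.1 s1
      _ = 1 := hμ1
  have hcost : ∑ p, d p * g13 p ≤ (∑ p, d p * g12 p) + (∑ p, d p * g23 p) + T := by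
    have e1 : ∑ p, d p * g13 p = ∑ s1, ∑ s2, ∑ s3, d (s1, s3) * h s1 s2 s3 := by
      rw [Fintype.sum_prod_type]
      refine Finset.sum_congr rfl fun s1 _ => ?_
      rw [Finset.sum_comm]
      exact Finset.sum_congr rfl fun s2 _ => by rw [Finset.mul_sum]
    rw [e1]
    have e2 : ∑ s1, ∑ s2, ∑ s3, d (s1, s3) * h s1 s2 s3 ≤
        ∑ s1, ∑ s2, ∑ s3, (d (s1, s2) + d (s2, s3) + T) * h s1 s2 s3 := by
      refine Finset.sum_le_sum fun s1 _ => Finset.sum_le_sum fun s2 _ =>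
        Finset.sum_le_sum fun s3 _ => ?_
      exact mul_le_mul_of_nonneg_right (hT s1 s2 s3) (hh0 s1 s2 s3)
    refine e2.trans (le_of_eq ?_)
    have e3 : ∀ s1 s2 s3 : S, (d (s1, s2) + d (s2, s3) + T) * h s1 s2 s3 =
        d (s1, s2) * h s1 s2 s3 + d (s2, s3) * h s1 s2 s3 + T * h s1 s2 s3 := by
      intro s1 s2 s3; ring
    simp only [e3, Finset.sum_add_distrib]
    have p1 : ∑ s1, ∑ s2, ∑ s3, d (s1, s2) * h s1 s2 s3 = ∑ p, d p * g12 p := by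
      rw [Fintype.sum_prod_type]
      refine Finset.sum_congr rfl fun s1 _ => Finset.sum_congr rfl fun s2 _ => ?_
      rw [← Finset.mul_sum, hsum3 s1 s2]
    have p2 : ∑ s1, ∑ s2, ∑ s3, d (s2, s3) * h s1 s2 s3 = ∑ p, d p * g23 p := by
      rw [Fintype.sum_prod_type, Finset.sum_comm]
      refine Finset.sum_congr rfl fun s2 _ => ?_
      rw [Finset.sum_comm]
      refine Finset.sum_congr rfl fun s3 _ => ?_
      rw [← Finset.mul_sum, hsum1 s2 s3]
    have p3 : ∑ s1, ∑ s2, ∑ s3, T * h s1 s2 s3 = T := by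
      simp only [← Finset.mul_sum, htot, mul_one]
    rw [p1, p2, p3]
  have := W1_le μ ρ d hd0 g13 hg13
  linarith

lemma W1_swap_le (μ ν : S → ℝ) (d : S × S → ℝ) (hd0 : ∀ p, 0 ≤ d p)
    (hμ0 : ∀ s, 0 ≤ μ s) (hν0 : ∀ s, 0 ≤ ν s)
    (hμ1 : ∑ s, μ s = 1) (hν1 : ∑ s, ν s = 1)
    (D : ℝ) (hD : ∀ p : S × S, d (p.2, p.1) ≤ d p + D) :
    W1 ν μ d ≤ W1 μ ν d + D := by
  apply le_of_forall_pos_le_add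
  intro ε hε
  obtain ⟨g, hg, hcg⟩ := W1_exists_lt μ ν d hd0 hμ0 hν0 hμ1 hν1 ε hε
  have hg' : IsCoupling ν μ (fun p => g (p.2, p.1)) :=
    ⟨fun p => hg.1 _, fun s => hg.2.2 s, fun s' => hg.2.1 s'⟩
  have htot : ∑ p, g p = 1 := coupling_total μ ν g hg hμ1
  have hcost : ∑ p : S × S, d p * g (p.2, p.1) ≤ (∑ p, d p * g p) + D := by
    have e : ∑ p : S × S, d p * g (p.2, p.1) = ∑ q : S × S, d (q.2, q.1) * g q := by
      rw [Fintype.sum_prod_type, Fintype.sum_prod_type, Finset.sum_comm]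
    rw [e]
    calc ∑ q : S × S, d (q.2, q.1) * g q ≤ ∑ q : S × S, (d q + D) * g q := by
          refine Finset.sum_le_sum fun q _ => mul_le_mul_of_nonneg_right (hD q) (hg.1 q)
      _ = (∑ q, d q * g q) + D * ∑ q, g q := by
          simp only [add_mul, Finset.sum_add_distrib, Finset.mul_sum]
      _ = (∑ q, d q * g q) + D := by rw [htot, mul_one]
  have := W1_le ν μ d hd0 _ hg'
  calc W1 ν μ d ≤ ∑ p : S × S, d p * g (p.2, p.1) := this
    _ ≤ (∑ p, d p * g p) + D := hcost
    _ ≤ W1 μ ν d + D + ε := by linarith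
  
end helper

/-- The bisimulation metric — the unique (bounded) nonnegative fixed point `d̃`
of the operator `F` — is a pseudometric on `S`: it vanishes on the diagonal, is
symmetric, and satisfies the triangle inequality. -/
theorem bisim_metric_is_pseudometric
    {S A : Type} [Fintype S] [Nonempty S] [Fintype A] [Nonempty A]
    (c : ℝ) (hc0 : 0 ≤ c) (hc1 : c < 1)
    (P : S → A → S → ℝ)
    (hP0 : ∀ s a s', 0 ≤ P s a s')
    (hP1 : ∀ s a, ∑ s', P s a s' = 1)
    (R : S → A → ℝ)
    (dt : S × S → ℝ)
    (hdt0 : ∀ p, 0 ≤ dt p)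
    (hfix : bisimF c P R dt = dt) :
    (∀ s : S, dt (s, s) = 0) ∧
    (∀ si sj : S, dt (si, sj) = dt (sj, si)) ∧
    (∀ si sj sk : S, dt (si, sk) ≤ dt (si, sj) + dt (sj, sk)) := by
  classical
  have hfix' : ∀ p : S × S, dt p = univ.sup' univ_nonempty
      (fun a => (1 - c) * |R p.1 a - R p.2 a| + c * W1 (P p.1 a) (P p.2 a) dt) :=
    fun p => (congrFun hfix p).symm
  -- Part 1: diagonal
  have part1 : ∀ s : S, dt (s, s) = 0 := by
    set M := univ.sup' univ_nonempty (fun s : S => dt (s, s)) with hM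
    have hMle : ∀ s : S, dt (s, s) ≤ M := fun s => le_sup' (fun s : S => dt (s, s)) (mem_univ s)
    obtain ⟨s₀, -, hs₀⟩ := exists_mem_eq_sup' (univ_nonempty) (fun s : S => dt (s, s))
    have hdiag : ∀ s : S, dt (s, s) ≤ c * M := by
      intro s
      rw [hfix' (s, s)]
      apply sup'_le
      intro a _
      have hR : |R (s, s).1 a - R (s, s).2 a| = 0 := by simp
      have hW : W1 (P s a) (P s a) dt ≤ M := by
        have hcoup : IsCoupling (P s a) (P s a)
            (fun p => if p.1 = p.2 then P s a p.1 else 0) := by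
          refine ⟨fun p => ?_, fun t => ?_, fun t => ?_⟩
          · dsimp only; split
            · exact hP0 s a _
            · exact le_refl 0
          · simp
          · simp only []
            rw [Finset.sum_ite_eq' univ t (fun x => P s a x)]
            simp
        refine (W1_le (P s a) (P s a) dt hdt0 _ hcoup).trans ?_
        have : ∑ p : S × S, dt p * (if p.1 = p.2 then P s a p.1 else 0)
            = ∑ t, dt (t, t) * P s a t := by
          rw [Fintype.sum_prod_type]
          refine Finset.sum_congr rfl fun t _ => ?_
          simp [Finset.sum_ite_eq' univ t (fun x => dt (t, x) * P s a x)]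
        rw [this]
        calc ∑ t, dt (t, t) * P s a t ≤ ∑ t, M * P s a t :=
              Finset.sum_le_sum fun t _ =>
                mul_le_mul_of_nonneg_right (hMle t) (hP0 s a t)
          _ = M := by rw [← Finset.mul_sum, hP1, mul_one]
      calc (1 - c) * |R (s, s).1 a - R (s, s).2 a| + c * W1 (P s a) (P s a) dt
          = c * W1 (P s a) (P s a) dt := by rw [hR]; ring
        _ ≤ c * M := mul_le_mul_of_nonneg_left hW hc0
    have hM0 : 0 ≤ M := (hdt0 (s₀, s₀)).trans (le_of_eq hs₀.symm)
    have hMc : M ≤ c * M := le_of_eq_of_le (hM.trans hs₀) (hdiag s₀)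
    have hMle0 : M ≤ 0 := by nlinarith
    intro s
    exact le_antisymm ((hMle s).trans hMle0) (hdt0 (s, s))
  refine ⟨part1, ?_, ?_⟩
  -- Part 2: symmetry
  · set D := univ.sup' univ_nonempty (fun p : S × S => dt (p.2, p.1) - dt p) with hD
    have hDle : ∀ p : S × S, dt (p.2, p.1) ≤ dt p + D := by
      intro p
      have := le_sup' (fun p : S × S => dt (p.2, p.1) - dt p) (mem_univ p)
      linarith
    obtain ⟨p₀, -, hp₀⟩ := exists_mem_eq_sup' (univ_nonempty)
      (fun p : S × S => dt (p.2, p.1) - dt p)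
    have key : dt (p₀.2, p₀.1) ≤ dt p₀ + c * D := by
      rw [hfix' (p₀.2, p₀.1)]
      apply sup'_le
      intro a _
      have hRsym : |R (p₀.2, p₀.1).1 a - R (p₀.2, p₀.1).2 a|
          = |R p₀.1 a - R p₀.2 a| := abs_sub_comm _ _
      have hWs : W1 (P p₀.2 a) (P p₀.1 a) dt ≤ W1 (P p₀.1 a) (P p₀.2 a) dt + D :=
        W1_swap_le (P p₀.1 a) (P p₀.2 a) dt hdt0 (hP0 _ a) (hP0 _ a) (hP1 _ a) (hP1 _ a) D hDle
      have hterm : (1 - c) * |R p₀.1 a - R p₀.2 a| + c * W1 (P p₀.1 a) (P p₀.2 a) dt ≤ dt p₀ := by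
        rw [hfix' p₀]
        exact le_sup' (fun a => (1 - c) * |R p₀.1 a - R p₀.2 a|
          + c * W1 (P p₀.1 a) (P p₀.2 a) dt) (mem_univ a)
      have hmul := mul_le_mul_of_nonneg_left hWs hc0
      calc (1 - c) * |R (p₀.2, p₀.1).1 a - R (p₀.2, p₀.1).2 a|
            + c * W1 (P (p₀.2, p₀.1).1 a) (P (p₀.2, p₀.1).2 a) dt
          = (1 - c) * |R p₀.1 a - R p₀.2 a| + c * W1 (P p₀.2 a) (P p₀.1 a) dt := by
            rw [hRsym]
        _ ≤ dt p₀ + c * D := by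
            have : c * W1 (P p₀.2 a) (P p₀.1 a) dt
                ≤ c * W1 (P p₀.1 a) (P p₀.2 a) dt + c * D := by
              have := mul_le_mul_of_nonneg_left hWs hc0
              linarith [mul_add c (W1 (P p₀.1 a) (P p₀.2 a) dt) D]
            linarith
    have hD0 : 0 ≤ D := by
      have s := Classical.arbitrary S
      have := le_sup' (fun p : S × S => dt (p.2, p.1) - dt p) (mem_univ (s, s))
      simp only at this
      linarith
    have hDc : D ≤ c * D := by
      have heq : D = dt (p₀.2, p₀.1) - dt p₀ := hD.trans hp₀
      linarith
    have hDle0 : D ≤ 0 := by nlinarith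
    intro si sj
    have h1 := hDle (si, sj)
    have h2 := hDle (sj, si)
    simp only at h1 h2
    exact le_antisymm (by linarith) (by linarith)
  -- Part 3: triangle inequality
  · set T := univ.sup' univ_nonempty
      (fun t : S × S × S => dt (t.1, t.2.2) - dt (t.1, t.2.1) - dt (t.2.1, t.2.2)) with hT
    have hTle : ∀ s1 s2 s3 : S, dt (s1, s3) ≤ dt (s1, s2) + dt (s2, s3) + T := by
      intro s1 s2 s3
      have := le_sup' (fun t : S × S × S =>
        dt (t.1, t.2.2) - dt (t.1, t.2.1) - dt (t.2.1, t.2.2)) (mem_univ (s1, s2, s3))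
      simp only at this
      linarith
    obtain ⟨t₀, -, ht₀⟩ := exists_mem_eq_sup' (univ_nonempty)
      (fun t : S × S × S => dt (t.1, t.2.2) - dt (t.1, t.2.1) - dt (t.2.1, t.2.2))
    have hT0 : 0 ≤ T := by
      have s := Classical.arbitrary S
      have := le_sup' (fun t : S × S × S =>
        dt (t.1, t.2.2) - dt (t.1, t.2.1) - dt (t.2.1, t.2.2)) (mem_univ (s, s, s))
      simp only at this
      have h0 := part1 s
      linarith
    have key : dt (t₀.1, t₀.2.2) ≤ dt (t₀.1, t₀.2.1) + dt (t₀.2.1, t₀.2.2) + c * T := by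
      rw [hfix' (t₀.1, t₀.2.2)]
      apply sup'_le
      intro a _
      have hWt : W1 (P t₀.1 a) (P t₀.2.2 a) dt ≤
          W1 (P t₀.1 a) (P t₀.2.1 a) dt + W1 (P t₀.2.1 a) (P t₀.2.2 a) dt + T :=
        W1_tri _ _ _ dt (hP0 _ a) (hP0 _ a) (hP0 _ a) (hP1 _ a) (hP1 _ a) (hP1 _ a)
          hdt0 T hTle
      have habs : |R t₀.1 a - R t₀.2.2 a| ≤
          |R t₀.1 a - R t₀.2.1 a| + |R t₀.2.1 a - R t₀.2.2 a| := abs_sub_le _ _ _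
      have h1 : (1 - c) * |R t₀.1 a - R t₀.2.1 a| + c * W1 (P t₀.1 a) (P t₀.2.1 a) dt
          ≤ dt (t₀.1, t₀.2.1) := by
        rw [hfix' (t₀.1, t₀.2.1)]
        exact le_sup' (fun a => (1 - c) * |R (t₀.1, t₀.2.1).1 a - R (t₀.1, t₀.2.1).2 a|
          + c * W1 (P (t₀.1, t₀.2.1).1 a) (P (t₀.1, t₀.2.1).2 a) dt) (mem_univ a)
      have h2 : (1 - c) * |R t₀.2.1 a - R t₀.2.2 a| + c * W1 (P t₀.2.1 a) (P t₀.2.2 a) dt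
          ≤ dt (t₀.2.1, t₀.2.2) := by
        rw [hfix' (t₀.2.1, t₀.2.2)]
        exact le_sup' (fun a => (1 - c) * |R (t₀.2.1, t₀.2.2).1 a - R (t₀.2.1, t₀.2.2).2 a|
          + c * W1 (P (t₀.2.1, t₀.2.2).1 a) (P (t₀.2.1, t₀.2.2).2 a) dt) (mem_univ a)
      have hc1' : (0:ℝ) ≤ 1 - c := by linarith
      have hm1 := mul_le_mul_of_nonneg_left hWt hc0
      have hm2 := mul_le_mul_of_nonneg_left habs hc1'
      simp only
      nlinarith
    have hTc : T ≤ c * T := by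
      have heq : T = dt (t₀.1, t₀.2.2) - dt (t₀.1, t₀.2.1) - dt (t₀.2.1, t₀.2.2) := hT.trans ht₀
      linarith
    have hTle0 : T ≤ 0 := by nlinarith
    intro si sj sk
    linarith [hTle si sj sk]
end

section
/- Fix a finite Markov decision process and c ∈ [0,1). Let d̃ be the unique bounded nonnegative fixed point of the operator F(d)(s_i, s_j) = max_{a ∈ A} [ (1−c)·|R(s_i,a) − R(s_j,a)| + c·W₁(P(·|s_i,a), P(·|s_j,a); d) ], and let V* : S → ℝ be the unique function satisfying the Bellman optimality equation V*(s) = max_{a ∈ A} [ R(s,a) + c · Σ_{s' ∈ S} P(s' | s,a) · V*(s') ] with discount factor c. Then the bisimulation metric bounds optimal value differences: for all s_i, s_j ∈ S, (1−c)·|V*(s_i) − V*(s_j)| ≤ d̃(s_i, s_j). -/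
open Finset

lemma exists_coupling_lt {S : Type} [Fintype S] (μ ν : S → ℝ)
    (hμ0 : ∀ s, 0 ≤ μ s) (hμ1 : ∑ s, μ s = 1)
    (hν0 : ∀ s, 0 ≤ ν s) (hν1 : ∑ s, ν s = 1)
    (d : S × S → ℝ) {ε : ℝ} (hε : 0 < ε) :
    ∃ g, IsCoupling μ ν g ∧ ∑ p, d p * g p < W1 μ ν d + ε := by
  have hne : {x | ∃ g : S × S → ℝ, IsCoupling μ ν g ∧ x = ∑ p, d p * g p}.Nonempty := by
    refine ⟨_, fun p => μ p.1 * ν p.2, ⟨fun p => mul_nonneg (hμ0 _) (hν0 _),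
      fun s => ?_, fun s' => ?_⟩, rfl⟩
    · simp [← Finset.mul_sum, hν1]
    · simp [← Finset.sum_mul, hμ1]
  obtain ⟨x, hx, hlt⟩ := Real.lt_sInf_add_pos hne hε
  obtain ⟨g, hg, rfl⟩ := hx
  exact ⟨g, hg, hlt⟩

lemma keydir_aux {S A : Type} [Fintype S] [Nonempty S] [Fintype A] [Nonempty A]
    (c : ℝ) (hc0 : 0 ≤ c) (hc1 : c < 1)
    (P : S → A → S → ℝ)
    (hP0 : ∀ s a s', 0 ≤ P s a s')
    (hP1 : ∀ s a, ∑ s', P s a s' = 1)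
    (R : S → A → ℝ)
    (dt : S × S → ℝ)
    (hfix : bisimF c P R dt = dt)
    (V : S → ℝ)
    (M : ℝ) (hMle : ∀ p : S × S, (1 - c) * |V p.1 - V p.2| - dt p ≤ M)
    (si sj : S) (a : A) (u v : ℝ)
    (hD : u - v ≤ (∑ s', P si a s' * V s' - ∑ s', P sj a s' * V s') ∨
          u - v ≤ (∑ s', P sj a s' * V s' - ∑ s', P si a s' * V s')) :
    (1 - c) * |R si a - R sj a| + c * ((1 - c) * (u - v)) ≤ dt (si, sj) + c * M := by
  have hsup : (1 - c) * |R si a - R sj a| + c * W1 (P si a) (P sj a) dt ≤ dt (si, sj) := by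
    have h := congrFun hfix (si, sj)
    rw [← h, bisimF]
    exact le_sup' (fun a => (1 - c) * |R (si, sj).1 a - R (si, sj).2 a|
      + c * W1 (P (si, sj).1 a) (P (si, sj).2 a) dt) (mem_univ a)
  refine le_of_forall_pos_le_add fun ε hε => ?_
  have hε' : 0 < ε / 2 := by linarith
  have hεc : 0 < (ε / 2) / (c + 1) := by positivity
  obtain ⟨g, ⟨hg0, hg1, hg2⟩, hcost⟩ := exists_coupling_lt (P si a) (P sj a)
    (hP0 si a) (hP1 si a) (hP0 sj a) (hP1 sj a) dt hεc
  have hsum1 : ∑ s', P si a s' * V s' = ∑ p : S × S, g p * V p.1 := by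
    rw [Fintype.sum_prod_type]
    refine Finset.sum_congr rfl fun s _ => ?_
    show P si a s * V s = ∑ y, g (s, y) * V s
    rw [← Finset.sum_mul, hg1, mul_comm]
  have hsum2 : ∑ s', P sj a s' * V s' = ∑ p : S × S, g p * V p.2 := by
    rw [Fintype.sum_prod_type, Finset.sum_comm]
    refine Finset.sum_congr rfl fun s _ => ?_
    show P sj a s * V s = ∑ y, g (y, s) * V s
    rw [← Finset.sum_mul, hg2, mul_comm]
  have hgsum : ∑ p : S × S, g p = 1 := by
    rw [Fintype.sum_prod_type]
    simp only [hg1]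
    exact hP1 si a
  have hbound : ∀ p : S × S, (1 - c) * |V p.1 - V p.2| ≤ dt p + M := fun p => by
    have := hMle p; linarith
  -- sum bound in both orientations
  have hsumbound : (1 - c) * |∑ p : S × S, g p * V p.1 - ∑ p : S × S, g p * V p.2|
      ≤ ∑ p : S × S, dt p * g p + M := by
    have h1 : ∀ p : S × S, (1 - c) * (g p * V p.1 - g p * V p.2) ≤ g p * (dt p + M) := by
      intro p
      have h2 : (1 - c) * (V p.1 - V p.2) ≤ dt p + M := by
        have h3 := le_abs_self (V p.1 - V p.2)
        have h4 := hbound p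
        nlinarith [abs_nonneg (V p.1 - V p.2)]
      calc (1 - c) * (g p * V p.1 - g p * V p.2)
          = g p * ((1 - c) * (V p.1 - V p.2)) := by ring
        _ ≤ g p * (dt p + M) := mul_le_mul_of_nonneg_left h2 (hg0 p)
    have h1' : ∀ p : S × S, (1 - c) * (g p * V p.2 - g p * V p.1) ≤ g p * (dt p + M) := by
      intro p
      have h2 : (1 - c) * (V p.2 - V p.1) ≤ dt p + M := by
        have h3 := neg_le_abs (V p.1 - V p.2)
        have h4 := hbound p
        nlinarith [abs_nonneg (V p.1 - V p.2)]
      calc (1 - c) * (g p * V p.2 - g p * V p.1)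
          = g p * ((1 - c) * (V p.2 - V p.1)) := by ring
        _ ≤ g p * (dt p + M) := mul_le_mul_of_nonneg_left h2 (hg0 p)
    have hR : ∑ p : S × S, g p * (dt p + M) = ∑ p : S × S, dt p * g p + M := by
      simp only [mul_add, Finset.sum_add_distrib]
      rw [← Finset.sum_mul, hgsum]
      simp [mul_comm]
    rcases abs_cases (∑ p : S × S, g p * V p.1 - ∑ p : S × S, g p * V p.2) with ⟨h, -⟩ | ⟨h, -⟩
    · rw [h, ← hR]
      calc (1 - c) * (∑ p : S × S, g p * V p.1 - ∑ p : S × S, g p * V p.2)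
          = ∑ p : S × S, (1 - c) * (g p * V p.1 - g p * V p.2) := by
            rw [← Finset.sum_sub_distrib, ← Finset.mul_sum]
        _ ≤ ∑ p : S × S, g p * (dt p + M) := Finset.sum_le_sum fun p _ => h1 p
    · rw [h, ← hR]
      calc (1 - c) * -(∑ p : S × S, g p * V p.1 - ∑ p : S × S, g p * V p.2)
          = (1 - c) * (∑ p : S × S, g p * V p.2 - ∑ p : S × S, g p * V p.1) := by ring
        _ = ∑ p : S × S, (1 - c) * (g p * V p.2 - g p * V p.1) := by
            rw [← Finset.sum_sub_distrib, ← Finset.mul_sum]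
        _ ≤ ∑ p : S × S, g p * (dt p + M) := Finset.sum_le_sum fun p _ => h1' p
  have hinner : (1 - c) * (u - v) ≤ ∑ p : S × S, dt p * g p + M := by
    have habs1 := le_abs_self (∑ p : S × S, g p * V p.1 - ∑ p : S × S, g p * V p.2)
    have habs2 := neg_le_abs (∑ p : S × S, g p * V p.1 - ∑ p : S × S, g p * V p.2)
    rcases hD with h | h
    · rw [hsum1, hsum2] at h
      have hA := mul_le_mul_of_nonneg_left h (by linarith : (0:ℝ) ≤ 1 - c)
      have hB := mul_le_mul_of_nonneg_left habs1 (by linarith : (0:ℝ) ≤ 1 - c)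
      nlinarith
    · rw [hsum1, hsum2] at h
      have hA := mul_le_mul_of_nonneg_left h (by linarith : (0:ℝ) ≤ 1 - c)
      have hB := mul_le_mul_of_nonneg_left habs2 (by linarith : (0:ℝ) ≤ 1 - c)
      nlinarith
  have hcW : c * (∑ p : S × S, dt p * g p) ≤ c * (W1 (P si a) (P sj a) dt + (ε / 2) / (c + 1)) :=
    mul_le_mul_of_nonneg_left hcost.le hc0
  have hcε : c * ((ε / 2) / (c + 1)) ≤ ε / 2 := by
    have h1 : (c + 1) * (ε / 2 / (c + 1)) = ε / 2 := by field_simp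
    have h2 : (c + 1) * (ε / 2 / (c + 1)) = c * (ε / 2 / (c + 1)) + ε / 2 / (c + 1) := by ring
    linarith [hεc.le]
  have hcM : c * ((1 - c) * (u - v)) ≤ c * (∑ p : S × S, dt p * g p + M) :=
    mul_le_mul_of_nonneg_left hinner hc0
  have expand : c * (∑ p : S × S, dt p * g p + M)
      = c * (∑ p : S × S, dt p * g p) + c * M := by ring
  nlinarith [hsup]

lemma keydir {S A : Type} [Fintype S] [Nonempty S] [Fintype A] [Nonempty A]
    (c : ℝ) (hc0 : 0 ≤ c) (hc1 : c < 1)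
    (P : S → A → S → ℝ)
    (hP0 : ∀ s a s', 0 ≤ P s a s')
    (hP1 : ∀ s a, ∑ s', P s a s' = 1)
    (R : S → A → ℝ)
    (dt : S × S → ℝ)
    (hfix : bisimF c P R dt = dt)
    (V : S → ℝ) (hV : ∀ s, V s = bellman c P R V s)
    (M : ℝ) (hMle : ∀ p : S × S, (1 - c) * |V p.1 - V p.2| - dt p ≤ M)
    (si sj : S) :
    (1 - c) * (V si - V sj) ≤ dt (si, sj) + c * M := by
  obtain ⟨a, -, ha⟩ := Finset.exists_mem_eq_sup' (univ_nonempty (α := A))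
    (fun a => R si a + c * ∑ s', P si a s' * V s')
  have hVx : V si = R si a + c * ∑ s', P si a s' * V s' := by
    rw [hV si, bellman, ha]
  have hVy : R sj a + c * ∑ s', P sj a s' * V s' ≤ V sj := by
    rw [hV sj, bellman]
    exact le_sup' (fun a => R sj a + c * ∑ s', P sj a s' * V s') (mem_univ a)
  set u := ∑ s', P si a s' * V s'
  set v := ∑ s', P sj a s' * V s'
  have hkey := keydir_aux c hc0 hc1 P hP0 hP1 R dt hfix V M hMle si sj a u v
    (Or.inl le_rfl)
  have h1 : V si - V sj ≤ (R si a - R sj a) + c * (u - v) := by linarith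
  have h2 : (1 - c) * (V si - V sj) ≤ (1 - c) * ((R si a - R sj a) + c * (u - v)) :=
    mul_le_mul_of_nonneg_left h1 (by linarith)
  have h3 : (1 - c) * (R si a - R sj a) ≤ (1 - c) * |R si a - R sj a| :=
    mul_le_mul_of_nonneg_left (le_abs_self _) (by linarith)
  nlinarith [hkey]

lemma keydir' {S A : Type} [Fintype S] [Nonempty S] [Fintype A] [Nonempty A]
    (c : ℝ) (hc0 : 0 ≤ c) (hc1 : c < 1)
    (P : S → A → S → ℝ)
    (hP0 : ∀ s a s', 0 ≤ P s a s')
    (hP1 : ∀ s a, ∑ s', P s a s' = 1)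
    (R : S → A → ℝ)
    (dt : S × S → ℝ)
    (hfix : bisimF c P R dt = dt)
    (V : S → ℝ) (hV : ∀ s, V s = bellman c P R V s)
    (M : ℝ) (hMle : ∀ p : S × S, (1 - c) * |V p.1 - V p.2| - dt p ≤ M)
    (si sj : S) :
    (1 - c) * (V sj - V si) ≤ dt (si, sj) + c * M := by
  obtain ⟨a, -, ha⟩ := Finset.exists_mem_eq_sup' (univ_nonempty (α := A))
    (fun a => R sj a + c * ∑ s', P sj a s' * V s')
  have hVx : V sj = R sj a + c * ∑ s', P sj a s' * V s' := by
    rw [hV sj, bellman, ha]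
  have hVy : R si a + c * ∑ s', P si a s' * V s' ≤ V si := by
    rw [hV si, bellman]
    exact le_sup' (fun a => R si a + c * ∑ s', P si a s' * V s') (mem_univ a)
  set u := ∑ s', P sj a s' * V s'
  set v := ∑ s', P si a s' * V s'
  have hkey := keydir_aux c hc0 hc1 P hP0 hP1 R dt hfix V M hMle si sj a u v
    (Or.inr le_rfl)
  have h1 : V sj - V si ≤ (R sj a - R si a) + c * (u - v) := by linarith
  have h2 : (1 - c) * (V sj - V si) ≤ (1 - c) * ((R sj a - R si a) + c * (u - v)) :=
    mul_le_mul_of_nonneg_left h1 (by linarith)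
  have h3 : (1 - c) * (R sj a - R si a) ≤ (1 - c) * |R si a - R sj a| := by
    have h5 := neg_le_abs (R si a - R sj a)
    have h4 : R sj a - R si a ≤ |R si a - R sj a| := by linarith
    exact mul_le_mul_of_nonneg_left h4 (by linarith)
  nlinarith [hkey]

/-- The bisimulation metric bounds optimal value differences:
`(1 - c)·|V*(sᵢ) - V*(sⱼ)| ≤ d̃(sᵢ, sⱼ)`, where `V*` is the optimal value
function with discount factor `c`. -/
theorem bisim_metric_bounds_value_difference
    {S A : Type} [Fintype S] [Nonempty S] [Fintype A] [Nonempty A]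
    (c : ℝ) (hc0 : 0 ≤ c) (hc1 : c < 1)
    (P : S → A → S → ℝ)
    (hP0 : ∀ s a s', 0 ≤ P s a s')
    (hP1 : ∀ s a, ∑ s', P s a s' = 1)
    (R : S → A → ℝ)
    (dt : S × S → ℝ)
    (hdt0 : ∀ p, 0 ≤ dt p)
    (hfix : bisimF c P R dt = dt)
    (V : S → ℝ) (hV : ∀ s, V s = bellman c P R V s) :
    ∀ si sj : S, (1 - c) * |V si - V sj| ≤ dt (si, sj) := by
  set f : S × S → ℝ := fun p => (1 - c) * |V p.1 - V p.2| - dt p with hf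
  set M := (univ : Finset (S × S)).sup' univ_nonempty f with hM
  have hMle : ∀ p : S × S, (1 - c) * |V p.1 - V p.2| - dt p ≤ M :=
    fun p => le_sup' f (mem_univ p)
  have key : ∀ si sj : S, (1 - c) * |V si - V sj| ≤ dt (si, sj) + c * M := by
    intro si sj
    rcases abs_cases (V si - V sj) with ⟨h, -⟩ | ⟨h, -⟩
    · rw [h]
      exact keydir c hc0 hc1 P hP0 hP1 R dt hfix V hV M hMle si sj
    · rw [h]
      have := keydir' c hc0 hc1 P hP0 hP1 R dt hfix V hV M hMle si sj
      calc (1 - c) * -(V si - V sj) = (1 - c) * (V sj - V si) := by ring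
        _ ≤ dt (si, sj) + c * M := this
  have hM0 : M ≤ 0 := by
    obtain ⟨p0, -, hp0⟩ := Finset.exists_mem_eq_sup' (univ_nonempty (α := S × S)) f
    have h1 := key p0.1 p0.2
    have h2 : M = (1 - c) * |V p0.1 - V p0.2| - dt (p0.1, p0.2) := by
      rw [hM, hp0]
    have h3 : (1 - c) * M = M - c * M := by ring
    nlinarith [h1, h2]
  intro si sj
  have h1 : (1 - c) * |V si - V sj| - dt (si, sj) ≤ M := hMle (si, sj)
  linarith
end

section
/- Let M = (S, A, P, R) and M' = (S', A, P', R') be two finite Markov decision processes sharing the same finite action space A, and let M ⊕ M' denote the disjoint-union MDP on state space S ⊔ S' (with transitions and rewards given by P, R on S and by P', R' on S', where states of S only transition within S and states of S' only transition within S'). Fix a discount factor γ ∈ [0,1) and let V*_M, V*_{M'} be the unique fixed points of the respective Bellman optimality operators. If there exists a bisimulation relation B on M ⊕ M' relating a state s ∈ S to a state s' ∈ S', then V*_M(s) = V*_{M'}(s'). In particular, any modification of an MDP that yields a bisimilar MDP preserves the optimal value of every state it relates. -/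
open Finset
open scoped Classical

/-- The transition function of the disjoint-union MDP `M ⊕ M'`: states of `S`
transition only within `S` according to `P`, and states of `S'` transition only
within `S'` according to `P'`. -/
def sumP {S S' A : Type} (P : S → A → S → ℝ) (P' : S' → A → S' → ℝ) :
    S ⊕ S' → A → S ⊕ S' → ℝ
  | Sum.inl s, a, Sum.inl t => P s a t
  | Sum.inr s, a, Sum.inr t => P' s a t
  | _, _, _ => 0

/-- The reward function of the disjoint-union MDP `M ⊕ M'`. -/
def sumR {S S' A : Type} (R : S → A → ℝ) (R' : S' → A → ℝ) : S ⊕ S' → A → ℝ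
  | Sum.inl s, a => R s a
  | Sum.inr s, a => R' s a

lemma bisim_key {T A : Type} [Fintype T] [Nonempty T] [Fintype A] [Nonempty A]
    (γ : ℝ) (hγ0 : 0 ≤ γ) (hγ1 : γ < 1)
    (P : T → A → T → ℝ) (hP0 : ∀ s a t, 0 ≤ P s a t)
    (hP1 : ∀ s a, ∑ t, P s a t = 1)
    (R : T → A → ℝ) (B : T → T → Prop) (hB : IsBisimulation P R B)
    (W : T → ℝ) (hW : ∀ u, W u = bellman γ P R W u)
    {u v : T} (huv : B u v) : W u = W v := by
  obtain ⟨hEq, hrel⟩ := hB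
  set st : Setoid T := ⟨B, hEq⟩ with hst
  set Q : Finset (T × T) := univ.filter (fun p => B p.1 p.2) with hQ
  have hQne : Q.Nonempty := ⟨(u, v), by simp [hQ, huv]⟩
  set D := Q.sup' hQne (fun p => W p.1 - W p.2) with hD
  have hmemQ : ∀ {x y : T}, B x y → (x, y) ∈ Q := by
    intro x y hxy; simp [hQ, hxy]
  have hD0 : (0:ℝ) ≤ D := by
    have h1 : W u - W u ≤ D :=
      Finset.le_sup' (fun p : T × T => W p.1 - W p.2) (hmemQ (hEq.refl u))
    linarith
  -- equality of class masses
  have class_eq : ∀ x y, B x y → ∀ (a : A) (c : Quotient st),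
      ∑ t ∈ univ.filter (fun t => Quotient.mk st t = c), P x a t =
      ∑ t ∈ univ.filter (fun t => Quotient.mk st t = c), P y a t := by
    intro x y hxy a c
    obtain ⟨t₀, rfl⟩ := Quotient.exists_rep c
    have hfil : (univ.filter (fun t => Quotient.mk st t = Quotient.mk st t₀))
        = univ.filter (fun t => B t₀ t) := by
      ext t
      simp only [Finset.mem_filter, Finset.mem_univ, true_and]
      constructor
      · intro h; exact hEq.symm (Quotient.exact h)
      · intro h; exact Quotient.sound (hEq.symm h)
    rw [hfil]
    exact (hrel x y hxy).2 a t₀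
  have sum_bound : ∀ x y, B x y → ∀ a : A,
      (∑ t, P x a t * W t) ≤ (∑ t, P y a t * W t) + D := by
    intro x y hxy a
    have h1 : (∑ t, P x a t * W t)
        = ∑ c : Quotient st, ∑ t ∈ univ.filter (fun t => Quotient.mk st t = c),
            P x a t * W t :=
      (Finset.sum_fiberwise univ (fun t => Quotient.mk st t) (fun t => P x a t * W t)).symm
    have h2 : (∑ t, P y a t * W t)
        = ∑ c : Quotient st, ∑ t ∈ univ.filter (fun t => Quotient.mk st t = c),
            P y a t * W t :=
      (Finset.sum_fiberwise univ (fun t => Quotient.mk st t) (fun t => P y a t * W t)).symm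
    have h3 : (1:ℝ) = ∑ c : Quotient st, ∑ t ∈ univ.filter (fun t => Quotient.mk st t = c),
            P y a t := by
      rw [Finset.sum_fiberwise univ (fun t => Quotient.mk st t) (fun t => P y a t)]
      exact (hP1 y a).symm
    rw [h1, h2]
    have key : ∀ c : Quotient st,
        (∑ t ∈ univ.filter (fun t => Quotient.mk st t = c), P x a t * W t)
        ≤ (∑ t ∈ univ.filter (fun t => Quotient.mk st t = c), P y a t * W t)
          + D * (∑ t ∈ univ.filter (fun t => Quotient.mk st t = c), P y a t) := by
      intro c
      set F := univ.filter (fun t => Quotient.mk st t = c) with hF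
      have hFne : F.Nonempty := by
        obtain ⟨t₀, rfl⟩ := Quotient.exists_rep c
        exact ⟨t₀, Finset.mem_filter.mpr ⟨Finset.mem_univ _, rfl⟩⟩
      set Mx := F.sup' hFne W with hMx
      set mn := F.inf' hFne W with hmn
      have hMxmn : Mx - mn ≤ D := by
        obtain ⟨t₁, ht₁F, ht₁⟩ := Finset.exists_mem_eq_sup' hFne W
        obtain ⟨t₂, ht₂F, ht₂⟩ := Finset.exists_mem_eq_inf' hFne W
        have hc1 : Quotient.mk st t₁ = c := (Finset.mem_filter.mp ht₁F).2
        have hc2 : Quotient.mk st t₂ = c := (Finset.mem_filter.mp ht₂F).2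
        have hb : B t₁ t₂ := Quotient.exact (hc1.trans hc2.symm)
        have hb2 : W t₁ - W t₂ ≤ D :=
          Finset.le_sup' (fun p : T × T => W p.1 - W p.2) (hmemQ hb)
        rw [hMx, hmn, ht₁, ht₂]
        exact hb2
      have hmass : (∑ t ∈ F, P x a t) = ∑ t ∈ F, P y a t := class_eq x y hxy a c
      have hmass0 : (0:ℝ) ≤ ∑ t ∈ F, P y a t :=
        Finset.sum_nonneg (fun t _ => hP0 y a t)
      have hx_up : (∑ t ∈ F, P x a t * W t) ≤ Mx * ∑ t ∈ F, P y a t := by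
        rw [← hmass, Finset.mul_sum]
        apply Finset.sum_le_sum
        intro t ht
        rw [mul_comm (P x a t)]
        exact mul_le_mul_of_nonneg_right (Finset.le_sup' W ht) (hP0 x a t)
      have hy_lo : mn * (∑ t ∈ F, P y a t) ≤ ∑ t ∈ F, P y a t * W t := by
        rw [Finset.mul_sum]
        apply Finset.sum_le_sum
        intro t ht
        rw [mul_comm (P y a t)]
        exact mul_le_mul_of_nonneg_right (Finset.inf'_le W ht) (hP0 y a t)
      have hMD : Mx * (∑ t ∈ F, P y a t) ≤ (mn + D) * (∑ t ∈ F, P y a t) :=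
        mul_le_mul_of_nonneg_right (by linarith) hmass0
      nlinarith [hx_up, hy_lo, hMD]
    calc (∑ c : Quotient st, ∑ t ∈ univ.filter (fun t => Quotient.mk st t = c), P x a t * W t)
        ≤ ∑ c : Quotient st, ((∑ t ∈ univ.filter (fun t => Quotient.mk st t = c), P y a t * W t)
            + D * (∑ t ∈ univ.filter (fun t => Quotient.mk st t = c), P y a t)) :=
          Finset.sum_le_sum (fun c _ => key c)
      _ = (∑ c : Quotient st, ∑ t ∈ univ.filter (fun t => Quotient.mk st t = c), P y a t * W t)
            + D * ∑ c : Quotient st, (∑ t ∈ univ.filter (fun t => Quotient.mk st t = c), P y a t) := by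
          rw [Finset.sum_add_distrib, Finset.mul_sum]
      _ = (∑ c : Quotient st, ∑ t ∈ univ.filter (fun t => Quotient.mk st t = c), P y a t * W t) + D := by
          rw [← h3, mul_one]
  -- each related pair has difference ≤ γ * D
  have pair_bound : ∀ p ∈ Q, W p.1 - W p.2 ≤ γ * D := by
    rintro ⟨x, y⟩ hp
    have hxy : B x y := by simpa [hQ] using hp
    obtain ⟨a, -, ha⟩ := Finset.exists_mem_eq_sup' (univ_nonempty (α := A))
      (fun a => R x a + γ * ∑ t, P x a t * W t)
    have hWx : W x = R x a + γ * ∑ t, P x a t * W t := by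
      rw [hW x]; exact ha
    have hWy : R y a + γ * ∑ t, P y a t * W t ≤ W y := by
      rw [hW y]
      exact Finset.le_sup' (fun a => R y a + γ * ∑ t, P y a t * W t) (Finset.mem_univ a)
    have hR : R x a = R y a := (hrel x y hxy).1 a
    have hs := sum_bound x y hxy a
    have hmul : γ * (∑ t, P x a t * W t) ≤ γ * ((∑ t, P y a t * W t) + D) :=
      mul_le_mul_of_nonneg_left hs hγ0
    have : γ * ((∑ t, P y a t * W t) + D) = γ * (∑ t, P y a t * W t) + γ * D := by ring
    linarith [hmul]
  have hDγ : D ≤ γ * D := Finset.sup'_le hQne _ pair_bound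
  have hD_le0 : D ≤ 0 := by nlinarith
  have h1 : W u - W v ≤ D := Finset.le_sup' (fun p : T × T => W p.1 - W p.2) (hmemQ huv)
  have h2 : W v - W u ≤ D := Finset.le_sup' (fun p : T × T => W p.1 - W p.2) (hmemQ (hEq.symm huv))
  linarith

section
variable {S S' A : Type} (P : S → A → S → ℝ) (P' : S' → A → S' → ℝ)
    (R : S → A → ℝ) (R' : S' → A → ℝ)

lemma sumP_ll (s : S) (a : A) (t : S) : sumP P P' (Sum.inl s) a (Sum.inl t) = P s a t := rfl
lemma sumP_lr (s : S) (a : A) (t : S') : sumP P P' (Sum.inl s) a (Sum.inr t) = 0 := rfl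
lemma sumP_rl (s : S') (a : A) (t : S) : sumP P P' (Sum.inr s) a (Sum.inl t) = 0 := rfl
lemma sumP_rr (s : S') (a : A) (t : S') : sumP P P' (Sum.inr s) a (Sum.inr t) = P' s a t := rfl
lemma sumR_l (s : S) (a : A) : sumR R R' (Sum.inl s) a = R s a := rfl
lemma sumR_r (s : S') (a : A) : sumR R R' (Sum.inr s) a = R' s a := rfl

end

/-- If a bisimulation relation on the disjoint-union MDP `M ⊕ M'` relates a
state `s` of `M` to a state `s'` of `M'`, then the optimal values agree:
`V*_M(s) = V*_{M'}(s')`. -/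
theorem bisimilar_across_mdps_equal_optimal_value
    {S S' A : Type} [Fintype S] [Nonempty S] [Fintype S'] [Nonempty S']
    [Fintype A] [Nonempty A]
    (γ : ℝ) (hγ0 : 0 ≤ γ) (hγ1 : γ < 1)
    (P : S → A → S → ℝ)
    (hP0 : ∀ s a t, 0 ≤ P s a t)
    (hP1 : ∀ s a, ∑ t, P s a t = 1)
    (R : S → A → ℝ)
    (P' : S' → A → S' → ℝ)
    (hP'0 : ∀ s a t, 0 ≤ P' s a t)
    (hP'1 : ∀ s a, ∑ t, P' s a t = 1)
    (R' : S' → A → ℝ)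
    (B : S ⊕ S' → S ⊕ S' → Prop)
    (hB : IsBisimulation (sumP P P') (sumR R R') B)
    (V : S → ℝ) (hV : ∀ s, V s = bellman γ P R V s)
    (V' : S' → ℝ) (hV' : ∀ s', V' s' = bellman γ P' R' V' s')
    (s : S) (s' : S') (h : B (Sum.inl s) (Sum.inr s')) :
    V s = V' s' := by
  classical
  set W : S ⊕ S' → ℝ := Sum.elim V V' with hWdef
  have hsum0 : ∀ u a t, 0 ≤ sumP P P' u a t := by
    rintro (x | x) a (t | t)
    · exact hP0 _ _ _
    · exact le_refl 0
    · exact le_refl 0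
    · exact hP'0 _ _ _
  have hsum1 : ∀ u a, ∑ t, sumP P P' u a t = 1 := by
    rintro (x | x) a
    · rw [Fintype.sum_sum_type]
      simp only [sumP_ll, sumP_lr, Finset.sum_const_zero, add_zero]
      exact hP1 x a
    · rw [Fintype.sum_sum_type]
      simp only [sumP_rl, sumP_rr, Finset.sum_const_zero, zero_add]
      exact hP'1 x a
  have hW : ∀ u, W u = bellman γ (sumP P P') (sumR R R') W u := by
    rintro (x | x)
    · show V x = _
      rw [hV x]
      unfold bellman
      refine Finset.sup'_congr _ rfl (fun a _ => ?_)
      rw [Fintype.sum_sum_type]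
      simp only [sumP_ll, sumP_lr, sumR_l, zero_mul, Finset.sum_const_zero, add_zero,
        hWdef, Sum.elim_inl]
    · show V' x = _
      rw [hV' x]
      unfold bellman
      refine Finset.sup'_congr _ rfl (fun a _ => ?_)
      rw [Fintype.sum_sum_type]
      simp only [sumP_rl, sumP_rr, sumR_r, zero_mul, Finset.sum_const_zero, zero_add,
        hWdef, Sum.elim_inr]
  have := bisim_key γ hγ0 hγ1 (sumP P P') hsum0 hsum1 (sumR R R') B hB W hW h
  simpa [hWdef] using this
end
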